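/- arXiv:2512.06545 — 6 statements merged into one kernel-verified Lean document; each statement's English description precedes it below -/
import Mathlib

section
/- Let d be a positive integer and let σ₁, σ₂, σ₃ be permutations of a set X of d elements such that σ₁ ∘ σ₂ ∘ σ₃ = id and the subgroup generated by σ₁, σ₂, σ₃ acts transitively on X. For a permutation σ, let c(σ) denote the number of orbits of the cyclic group generated by σ. Then c(σ₁) + c(σ₂) + c(σ₃) ≤ d + 2. -/
/-- The number of orbits of the cyclic group generated by a permutation `σ`
(i.e., the number of cycles of `σ`, counting fixed points as cycles of length 1). -/
noncomputable def cycleCount {α : Type*} [Finite α] (σ : Equiv.Perm α) : ℕ :=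
  Nat.card (MulAction.orbitRel.Quotient (Subgroup.zpowers σ) α)

/-- The multiset of sizes of the orbits of the cyclic group generated by a permutation `σ`
(i.e., the cycle type of `σ`, with fixed points contributing parts equal to 1). -/
noncomputable def orbitSizes {α : Type*} [Finite α] (σ : Equiv.Perm α) : Multiset ℕ :=
  letI := Fintype.ofFinite (MulAction.orbitRel.Quotient (Subgroup.zpowers σ) α)
  (Finset.univ : Finset (MulAction.orbitRel.Quotient (Subgroup.zpowers σ) α)).val.map
    fun q => Nat.card q.orbit

/-!
Write each `σᵢ` as a product of `d - c(σᵢ)` transpositions. Multiplying a permutation `π` by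
a transposition `(a b)` changes its number of cycles by one: it splits a cycle when `a` and `b`
lie in the same cycle of `π` and merges two cycles otherwise. Adding `(a b)` to a set of
generators merges at most two orbits of the generated group, and none when `a` and `b` already
share an orbit. Hence for any word of `N` transpositions, `d + c(product) ≤ N + 2 · #orbits`.
For the concatenation of the three factorizations the product is `1` and the group is
transitive, so `2d ≤ 3d - Σ c(σᵢ) + 2`.
-/

open Equiv Equiv.Perm MulAction Subgroup Pointwise

namespace Setoid

variable {α : Type*} {r s : Setoid α}

lemma card_quotient_le_of_le [Finite (Quotient r)] (h : r ≤ s) :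
    Nat.card (Quotient s) ≤ Nat.card (Quotient r) :=
  Nat.card_le_card_of_surjective (Quotient.map' id fun _ _ ↦ @h _ _)
    (Quotient.ind fun x ↦ ⟨Quotient.mk r x, rfl⟩)

lemma card_quotient_lt_of_le [Finite (Quotient r)] (h : r ≤ s) {x y : α} (hs : s x y)
    (hr : ¬ r x y) : Nat.card (Quotient s) < Nat.card (Quotient r) := by
  let f : Quotient r → Quotient s := Quotient.map' id fun _ _ ↦ @h _ _
  have hf : f.Surjective := Quotient.ind fun x ↦ ⟨Quotient.mk r x, rfl⟩
  refine lt_of_not_ge fun hle ↦ hr (Quotient.exact ((hf.bijective_of_nat_card_le hle).1 ?_))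
  exact Quotient.sound hs

lemma card_quotient_le_add_one [Finite (Quotient s)] (h : r ≤ s) (a : α)
    (hmerge : ∀ x y, s x y → ¬ r x a → ¬ r y a → r x y) :
    Nat.card (Quotient r) ≤ Nat.card (Quotient s) + 1 := by
  classical
  let f : Quotient r → Option (Quotient s) := Quotient.lift
    (fun x ↦ if r x a then none else some (Quotient.mk s x)) fun x y hxy ↦ by
      have hxa : r x a ↔ r y a := ⟨r.trans (r.symm hxy), r.trans hxy⟩
      simp only [hxa, Quotient.sound (h hxy)]
  have hf : f.Injective := by
    refine Quotient.ind₂ fun x y hxy ↦ Quotient.sound ?_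
    by_cases hx : r x a <;> by_cases hy : r y a <;> simp_all [f]
    · exact r.trans hx (r.symm hy)
    · exact hmerge x y (Quotient.exact hxy) hx hy
  simpa using Nat.card_le_card_of_injective f hf

end Setoid

namespace MulAction

variable {G α : Type*} [Group G] [MulAction G α]

lemma orbitRel_mono {H K : Subgroup G} (h : H ≤ K) : orbitRel H α ≤ orbitRel K α :=
  fun {_ _} ⟨g, hg⟩ ↦ ⟨⟨g, h g.2⟩, hg⟩

lemma le_stabilizer_orbit (H : Subgroup G) (x : α) : H ≤ stabilizer G (orbit H x) :=
  fun g hg ↦ smul_orbit (⟨g, hg⟩ : H) x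

lemma orbit_subset_of_le_stabilizer {H : Subgroup G} {U : Set α} (hH : H ≤ stabilizer G U)
    {x : α} (hx : x ∈ U) : orbit H x ⊆ U := by
  rintro _ ⟨g, rfl⟩
  exact (mem_stabilizer_set.1 (hH g.2) x).2 hx

lemma card_orbitRel_bot : Nat.card (orbitRel.Quotient (⊥ : Subgroup G) α) = Nat.card α := by
  refine (Nat.card_eq_of_bijective _ ⟨fun x y hxy ↦ ?_, Quotient.mk_surjective⟩).symm
  obtain ⟨⟨g, hg⟩, hgy⟩ := Quotient.exact hxy
  obtain rfl : g = 1 := hg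
  exact hgy.symm.trans (one_smul G y)

lemma card_orbitRel_le_one [Finite α] {H : Subgroup G}
    (h : ∀ x y : α, ∃ g ∈ H, g • x = y) : Nat.card (orbitRel.Quotient H α) ≤ 1 :=
  Finite.card_le_one_iff_subsingleton.2 ⟨Quotient.ind₂ fun x y ↦ Quotient.sound <|
    let ⟨g, hg, hgx⟩ := h y x
    ⟨⟨g, hg⟩, hgx⟩⟩

end MulAction

namespace Equiv.Perm

variable {α : Type*}

lemma sameCycle_iff_mem_orbit_zpowers {σ : Perm α} {a b : α} :
    σ.SameCycle a b ↔ b ∈ orbit (zpowers σ) a := by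
  rw [mem_orbit_iff, exists_zpowers]
  rfl

variable [DecidableEq α]

lemma closure_insert_swap_le_stabilizer {T : Set (Perm α)} {U : Set α} {a b : α}
    (hT : closure T ≤ stabilizer (Perm α) U) (h : a ∈ U ↔ b ∈ U) :
    closure (insert (swap a b) T) ≤ stabilizer (Perm α) U :=
  (closure_le _).2 (Set.insert_subset (Equiv.swap_mem_stabilizer.2 h) ((closure_le _).1 hT))

lemma orbitRel_closure_insert_swap_of_mem_orbit {T : Set (Perm α)} {a b : α}
    (hab : b ∈ orbit (closure T) a) :
    orbitRel (closure (insert (swap a b) T)) α = orbitRel (closure T) α := by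
  refine le_antisymm (fun {x y} hxy ↦ ?_) (orbitRel_mono (closure_mono (Set.subset_insert _ _)))
  have hU : a ∈ orbit (closure T) y ↔ b ∈ orbit (closure T) y := by
    rw [mem_orbit_symm, mem_orbit_symm (a₁ := b), orbit_eq_iff.2 hab]
  exact orbit_subset_of_le_stabilizer
    (closure_insert_swap_le_stabilizer (le_stabilizer_orbit _ y) hU) (mem_orbit_self y) hxy

lemma card_orbitRel_closure_insert_swap_of_mem_orbit {T : Set (Perm α)} {a b : α}
    (hab : b ∈ orbit (closure T) a) :
    Nat.card (orbitRel.Quotient (closure (insert (swap a b) T)) α) =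
      Nat.card (orbitRel.Quotient (closure T) α) := by
  rw [orbitRel.Quotient, orbitRel.Quotient, orbitRel_closure_insert_swap_of_mem_orbit hab]

lemma closure_le_closure_insert_swap_mul (σ : Perm α) (a b : α) :
    closure {σ} ≤ closure (insert (swap a b) {swap a b * σ}) := by
  have := mul_mem (Subgroup.subset_closure (Set.mem_insert (swap a b) {swap a b * σ}))
    (Subgroup.subset_closure (Set.mem_insert_of_mem _ (Set.mem_singleton _)))
  rw [swap_mul_self_mul] at this
  rwa [closure_le, Set.singleton_subset_iff]

variable [Finite α]

lemma card_orbitRel_closure_le_closure_insert_swap_add_one (T : Set (Perm α)) (a b : α) :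
    Nat.card (orbitRel.Quotient (closure T) α) ≤
      Nat.card (orbitRel.Quotient (closure (insert (swap a b) T)) α) + 1 := by
  refine Setoid.card_quotient_le_add_one
    (orbitRel_mono (closure_mono (Set.subset_insert _ _))) a fun x y hxy hxa hya ↦ ?_
  set H := closure T
  by_cases hyb : y ∈ orbit H b
  · have hU : closure (insert (swap a b) T) ≤ stabilizer (Perm α) (orbit H a ∪ orbit H b) :=
      closure_insert_swap_le_stabilizer
        ((le_inf (le_stabilizer_orbit H a) (le_stabilizer_orbit H b)).trans
          stabilizer_inf_stabilizer_le_stabilizer_union)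
        (iff_of_true (Or.inl (mem_orbit_self a)) (Or.inr (mem_orbit_self b)))
    have hxb : x ∈ orbit H b :=
      (orbit_subset_of_le_stabilizer hU (Or.inr hyb) hxy).resolve_left hxa
    exact (orbitRel H α).trans hxb ((orbitRel H α).symm hyb)
  · have hU : a ∈ orbit H y ↔ b ∈ orbit H y :=
      iff_of_false (fun h ↦ hya (mem_orbit_symm.1 h)) (fun h ↦ hyb (mem_orbit_symm.1 h))
    exact orbit_subset_of_le_stabilizer
      (closure_insert_swap_le_stabilizer (le_stabilizer_orbit H y) hU) (mem_orbit_self y) hxy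

lemma sameCycle_swap_mul_of_not_sameCycle {σ : Perm α} {a b : α} (h : ¬ σ.SameCycle a b) :
    (swap a b * σ).SameCycle a b := by
  -- `swap a b * σ` follows the `σ`-cycle of `a`, except that it sends `σ⁻¹ a` to `b`.
  have hpow : ∀ n : ℕ, (swap a b * σ).SameCycle a ((σ ^ n) a) := by
    intro n
    induction n with
    | zero => exact SameCycle.refl _ _
    | succ n ih =>
      rw [pow_succ', mul_apply]
      by_cases ha : σ ((σ ^ n) a) = a
      · rw [ha]
      have hb : σ ((σ ^ n) a) ≠ b := fun hb ↦
        h ⟨(n + 1 : ℕ), by rw [zpow_natCast, pow_succ', mul_apply, hb]⟩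
      rw [← swap_apply_of_ne_of_ne ha hb, ← mul_apply]
      exact sameCycle_apply_right.2 ih
  obtain ⟨k, hk⟩ := (sameCycle_symm_apply_right.2 (SameCycle.refl σ a)).exists_nat_pow_eq
  have := hpow k
  rw [hk] at this
  simpa using sameCycle_apply_right.2 this

end Equiv.Perm

section cycleCount

variable {α : Type*} [Finite α]

lemma cycleCount_one : cycleCount (1 : Perm α) = Nat.card α := by
  rw [cycleCount, zpowers_one_eq_bot, card_orbitRel_bot]

lemma cycleCount_le_card (σ : Perm α) : cycleCount σ ≤ Nat.card α :=
  Nat.card_le_card_of_surjective _ Quotient.mk_surjective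

variable [DecidableEq α]

lemma cycleCount_swap_mul_le (σ : Perm α) (a b : α) :
    cycleCount (swap a b * σ) ≤ cycleCount σ + 1 := by
  rw [cycleCount, cycleCount, zpowers_eq_closure, zpowers_eq_closure]
  exact (card_orbitRel_closure_le_closure_insert_swap_add_one _ a b).trans
    (Nat.add_le_add_right (Setoid.card_quotient_le_of_le
      (orbitRel_mono (closure_le_closure_insert_swap_mul σ a b))) 1)

lemma cycleCount_swap_mul_lt {σ : Perm α} {a b : α} (h : ¬ σ.SameCycle a b) :
    cycleCount (swap a b * σ) < cycleCount σ := by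
  have hmerge : b ∈ orbit (closure {swap a b * σ}) a := by
    rw [← zpowers_eq_closure]
    exact sameCycle_iff_mem_orbit_zpowers.1 (sameCycle_swap_mul_of_not_sameCycle h)
  rw [cycleCount, cycleCount, zpowers_eq_closure, zpowers_eq_closure,
    ← card_orbitRel_closure_insert_swap_of_mem_orbit hmerge]
  exact Setoid.card_quotient_lt_of_le (orbitRel_mono (closure_le_closure_insert_swap_mul σ a b))
    ⟨⟨swap a b, Subgroup.subset_closure (Set.mem_insert _ _)⟩, swap_apply_left a b⟩
    (by rwa [orbitRel_apply, ← zpowers_eq_closure, ← sameCycle_iff_mem_orbit_zpowers])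

lemma exists_isSwap_list_prod_eq (σ : Perm α) :
    ∃ L : List (Perm α), (∀ t ∈ L, t.IsSwap) ∧ L.prod = σ ∧
      L.length + cycleCount σ ≤ Nat.card α := by
  induction hn : Nat.card α - cycleCount σ using Nat.strong_induction_on generalizing σ with
  | _ n ih =>
  by_cases hσ : σ = 1
  · exact ⟨[], by simp, by simp [hσ], by simpa using cycleCount_le_card σ⟩
  obtain ⟨a, ha⟩ : ∃ a, σ a ≠ a := by
    by_contra! h
    exact hσ (Equiv.ext h)
  set τ := swap a (σ a) * σ
  have hτa : τ a = a := by simp [τ]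
  have hlt : cycleCount σ < cycleCount τ := by
    have := cycleCount_swap_mul_lt (σ := τ) fun h ↦ ha (h.eq_of_left hτa).symm
    rwa [swap_mul_self_mul] at this
  obtain ⟨L, hswap, hprod, hlen⟩ := ih _ (by have := cycleCount_le_card τ; omega) τ rfl
  refine ⟨swap a (σ a) :: L, List.forall_mem_cons.2 ⟨⟨a, σ a, ha.symm, rfl⟩, hswap⟩,
    by rw [List.prod_cons, hprod, swap_mul_self_mul], ?_⟩
  rw [List.length_cons]
  omega

lemma card_add_cycleCount_prod_le (L : List (Perm α)) (hL : ∀ t ∈ L, t.IsSwap) :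
    Nat.card α + cycleCount L.prod ≤
      L.length + 2 * Nat.card (orbitRel.Quotient (closure {g | g ∈ L}) α) := by
  induction L with
  | nil =>
    have hS : {g | g ∈ ([] : List (Perm α))} = ∅ := by ext; simp
    rw [hS, Subgroup.closure_empty, List.prod_nil, cycleCount_one, card_orbitRel_bot,
      List.length_nil]
    omega
  | cons t L ih =>
    obtain ⟨⟨a, b, -, rfl⟩, hLswap⟩ := List.forall_mem_cons.1 hL
    have hS : {g | g ∈ swap a b :: L} = insert (swap a b) {g | g ∈ L} := by ext; simp
    specialize ih hLswap
    rw [List.prod_cons, List.length_cons, hS]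
    by_cases hab : b ∈ orbit (closure {g | g ∈ L}) a
    · have := cycleCount_swap_mul_le L.prod a b
      rw [card_orbitRel_closure_insert_swap_of_mem_orbit hab]
      omega
    · have hprod : L.prod ∈ closure {g | g ∈ L} :=
        list_prod_mem fun g hg ↦ Subgroup.subset_closure hg
      have := cycleCount_swap_mul_lt fun h ↦
        hab (orbitRel_mono (zpowers_le.2 hprod) (sameCycle_iff_mem_orbit_zpowers.1 h))
      have := card_orbitRel_closure_le_closure_insert_swap_add_one {g | g ∈ L} a b
      omega

end cycleCount

theorem ree_inequality_general (d : ℕ) (σ₁ σ₂ σ₃ : Equiv.Perm (Fin d))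
    (hprod : σ₁ * σ₂ * σ₃ = 1)
    (htrans : ∀ x y : Fin d,
      ∃ g ∈ Subgroup.closure ({σ₁, σ₂, σ₃} : Set (Equiv.Perm (Fin d))), g x = y) :
    cycleCount σ₁ + cycleCount σ₂ + cycleCount σ₃ ≤ d + 2 := by
  obtain ⟨L₁, hs₁, hp₁, hl₁⟩ := exists_isSwap_list_prod_eq σ₁
  obtain ⟨L₂, hs₂, hp₂, hl₂⟩ := exists_isSwap_list_prod_eq σ₂
  obtain ⟨L₃, hs₃, hp₃, hl₃⟩ := exists_isSwap_list_prod_eq σ₃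
  set L := L₁ ++ L₂ ++ L₃
  have hswap : ∀ t ∈ L, t.IsSwap := by
    simp only [L, List.mem_append]
    rintro t ((h | h) | h)
    exacts [hs₁ t h, hs₂ t h, hs₃ t h]
  have hgen : closure {σ₁, σ₂, σ₃} ≤ closure {g | g ∈ L} := by
    rw [closure_le]
    rintro _ (rfl | rfl | rfl) <;> [rw [← hp₁]; rw [← hp₂]; rw [← hp₃]] <;>
      exact list_prod_mem fun g hg ↦ Subgroup.subset_closure (by simp [L, hg])
  have horb : Nat.card (orbitRel.Quotient (closure {g | g ∈ L}) (Fin d)) ≤ 1 :=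
    card_orbitRel_le_one fun x y ↦
      let ⟨g, hg, hgy⟩ := htrans x y
      ⟨g, hgen hg, hgy⟩
  have hbound := card_add_cycleCount_prod_le L hswap
  have hprodL : L.prod = 1 := by rw [List.prod_append, List.prod_append, hp₁, hp₂, hp₃, hprod]
  have hlen : L.length = L₁.length + L₂.length + L₃.length := by
    simp only [L, List.length_append]
  rw [hprodL, cycleCount_one, Nat.card_fin] at hbound
  rw [Nat.card_fin] at hl₁ hl₂ hl₃
  omega

/-- Riemann–Hurwitz inequality (Ree's inequality): if `σ₁ ∘ σ₂ ∘ σ₃ = id` on a set of `d`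
elements and the subgroup generated by `σ₁, σ₂, σ₃` acts transitively, then
`c(σ₁) + c(σ₂) + c(σ₃) ≤ d + 2`. -/
theorem ree_inequality (d : ℕ) (hd : 0 < d) (σ₁ σ₂ σ₃ : Equiv.Perm (Fin d))
    (hprod : σ₁ * σ₂ * σ₃ = 1)
    (htrans : ∀ x y : Fin d,
      ∃ g ∈ Subgroup.closure ({σ₁, σ₂, σ₃} : Set (Equiv.Perm (Fin d))), g x = y) :
    cycleCount σ₁ + cycleCount σ₂ + cycleCount σ₃ ≤ d + 2 :=
  ree_inequality_general d σ₁ σ₂ σ₃ hprod htrans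
end

section
/- There exist permutations σ₁, σ₂, σ₃ of {1, …, 25} such that σ₁ ∘ σ₂ ∘ σ₃ = id, the subgroup generated by σ₁, σ₂, σ₃ acts transitively on {1, …, 25}, and the multisets of orbit sizes of the cyclic groups generated by σ₁, σ₂, σ₃ are, respectively, {8,8,2,2,2,1,1,1}, {7,4,4,2,2,2,2,1,1}, and {11,5,3,2,2,2}. -/
set_option maxRecDepth 10000
set_option maxHeartbeats 1000000
set_option linter.unusedSectionVars false


section Aux

variable {α : Type*} [Fintype α] [DecidableEq α]

lemma mem_orbit_zpowers_iff (σ : Equiv.Perm α) (x y : α) :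
    y ∈ MulAction.orbit (Subgroup.zpowers σ) x ↔ σ.SameCycle x y := by
  constructor
  · rintro ⟨⟨g, hg⟩, h⟩
    obtain ⟨i, rfl⟩ := Subgroup.mem_zpowers_iff.mp hg
    exact ⟨i, h⟩
  · rintro ⟨i, h⟩
    exact ⟨⟨σ ^ i, Subgroup.mem_zpowers_iff.mpr ⟨i, rfl⟩⟩, h⟩

lemma sameCycle_iff_exists_lt (σ : Equiv.Perm α) (M : ℕ) (hM : Fintype.card α + 2 ≤ M)
    (x y : α) : σ.SameCycle x y ↔ ∃ n, n < M ∧ (σ ^ n) x = y := by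
  constructor
  · intro h
    obtain ⟨i, _, hile, hi⟩ := h.exists_pow_eq σ
    have hcard := Finset.card_le_univ (σ.cycleOf x).support
    exact ⟨i, by omega, hi⟩
  · rintro ⟨n, _, h⟩
    exact ⟨(n : ℤ), by rw [zpow_natCast]; exact h⟩

lemma orbitSizes_eq_of_reps (σ : Equiv.Perm α) (P : α → α → Prop)
    [∀ x, DecidablePred (P x)] (hP : ∀ x y, P x y ↔ σ.SameCycle x y)
    (reps : Finset α)
    (hcov : ∀ x, ∃ r ∈ reps, P r x)
    (hinj : ∀ r ∈ reps, ∀ s ∈ reps, P r s → r = s) :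
    orbitSizes σ
      = reps.val.map (fun r => (Finset.univ.filter (fun y => P r y)).card) := by
  classical
  set Q := MulAction.orbitRel.Quotient (Subgroup.zpowers σ) α with hQ
  have hmk : ∀ r x : α, σ.SameCycle x r →
      (Quotient.mk'' r : Q) = Quotient.mk'' x := by
    intro r x h
    exact Quotient.eq''.mpr ((MulAction.orbitRel_apply).mpr
      ((mem_orbit_zpowers_iff σ x r).mpr h))
  have hmk' : ∀ r x : α, (Quotient.mk'' r : Q) = Quotient.mk'' x → σ.SameCycle x r := by
    intro r x h
    exact (mem_orbit_zpowers_iff σ x r).mp ((MulAction.orbitRel_apply).mp (Quotient.eq''.mp h))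
  have hcardorb : ∀ x : α,
      Nat.card (MulAction.orbit (Subgroup.zpowers σ) x)
        = (Finset.univ.filter (fun y => P x y)).card := by
    intro x
    have : MulAction.orbit (Subgroup.zpowers σ) x = {y | P x y} := by
      ext y
      rw [Set.mem_setOf_eq, hP, mem_orbit_zpowers_iff]
    rw [this, Nat.card_coe_set_eq, Set.ncard_eq_toFinset_card', Set.toFinset_setOf]
  have huniv : ∀ inst : Fintype Q,
      (@Finset.univ Q inst).val = reps.val.map (fun r => (Quotient.mk'' r : Q)) := by
    intro inst
    have hnd : (reps.val.map (fun r => (Quotient.mk'' r : Q))).Nodup := by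
      refine Multiset.Nodup.map_on ?_ reps.nodup
      intro r hr s hs h
      exact (hinj s hs r hr ((hP s r).mpr (hmk' r s h))).symm
    have : (⟨reps.val.map (fun r => (Quotient.mk'' r : Q)), hnd⟩ : Finset Q)
        = @Finset.univ Q inst := by
      refine Finset.eq_univ_iff_forall.mpr ?_
      intro q
      refine Quotient.inductionOn' q ?_
      intro x
      obtain ⟨r, hr, hrx⟩ := hcov x
      simp only [Finset.mem_mk, Multiset.mem_map]
      exact ⟨r, hr, hmk r x (((hP r x).mp hrx).symm)⟩
    rw [← this]
  unfold orbitSizes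
  rw [huniv _, Multiset.map_map]
  refine Multiset.map_congr rfl ?_
  intro r _
  show Nat.card (MulAction.orbitRel.Quotient.orbit (Quotient.mk'' r : Q)) = _
  rw [MulAction.orbitRel.Quotient.orbit_mk, hcardorb]

end Aux

private def pa : Equiv.Perm (Fin 25) :=
  ⟨![11,3,20,16,24,21,22,7,8,4,0,1,10,14,13,19,17,12,5,15,18,9,6,23,2], ![10,11,24,1,9,18,22,7,8,21,12,0,17,14,13,19,3,16,20,15,2,5,6,23,4], by intro x; revert x; decide, by intro x; revert x; decide⟩

private def pb : Equiv.Perm (Fin 25) :=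
  ⟨![20,17,16,9,7,5,11,24,12,3,15,2,8,10,22,6,13,1,14,18,0,21,19,4,23], ![20,17,11,9,23,5,15,4,12,3,13,6,8,16,18,10,2,1,19,22,0,21,14,24,7], by intro x; revert x; decide, by intro x; revert x; decide⟩

private def pc : Equiv.Perm (Fin 25) :=
  ⟨![13,6,7,17,3,19,14,4,12,21,8,20,1,18,16,22,9,2,0,10,11,5,15,24,23], ![18,12,17,4,7,21,1,2,10,16,19,20,8,0,6,22,14,3,13,5,11,9,15,24,23], by intro x; revert x; decide, by intro x; revert x; decide⟩

/-- Realizability of the degree-25 branch-data triple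
`[8, 8, 2, 2, 2, 1, 1, 1]`, `[7, 4, 4, 2, 2, 2, 2, 1, 1]`, `[11, 5, 3, 2, 2, 2]`
by a transitive permutation triple with product the identity. -/
theorem realizable_triple_7 :
    ∃ σ₁ σ₂ σ₃ : Equiv.Perm (Fin 25),
      σ₁ * σ₂ * σ₃ = 1 ∧
      (∀ x y : Fin 25,
        ∃ g ∈ Subgroup.closure ({σ₁, σ₂, σ₃} : Set (Equiv.Perm (Fin 25))), g x = y) ∧
      orbitSizes σ₁ = ({8, 8, 2, 2, 2, 1, 1, 1} : Multiset ℕ) ∧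
      orbitSizes σ₂ = ({7, 4, 4, 2, 2, 2, 2, 1, 1} : Multiset ℕ) ∧
      orbitSizes σ₃ = ({11, 5, 3, 2, 2, 2} : Multiset ℕ) := by
  refine ⟨pa, pb, pc, ?_, ?_, ?_, ?_, ?_⟩
  · exact Equiv.ext (by decide)
  · -- transitivity via the 25-cycle pa * pa * pb
    have hw : ∀ x : Fin 25, ∃ n, n < 25 ∧ ((pa * pa * pb) ^ n) 0 = x := by decide
    set H := Subgroup.closure ({pa, pb, pc} : Set (Equiv.Perm (Fin 25))) with hH
    have hmemw : (pa * pa * pb) ∈ H := by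
      refine mul_mem (mul_mem ?_ ?_) ?_ <;>
        exact Subgroup.subset_closure (by simp)
    intro x y
    obtain ⟨nx, -, hx⟩ := hw x
    obtain ⟨ny, -, hy⟩ := hw y
    refine ⟨(pa * pa * pb) ^ ny * ((pa * pa * pb) ^ nx)⁻¹,
      mul_mem (pow_mem hmemw ny) (inv_mem (pow_mem hmemw nx)), ?_⟩
    have : ((pa * pa * pb) ^ nx)⁻¹ x = 0 := by
      rw [← hx]; exact Equiv.symm_apply_apply _ _
    rw [Equiv.Perm.mul_apply, this, hy]
  · rw [orbitSizes_eq_of_reps pa (fun x y => ∃ n, n < 27 ∧ (pa ^ n) x = y)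
      (fun x y => (sameCycle_iff_exists_lt pa 27 (by simp) x y).symm)
      ({0, 2, 6, 7, 8, 13, 15, 23} : Finset (Fin 25)) (by decide) (by decide)]
    decide
  · rw [orbitSizes_eq_of_reps pb (fun x y => ∃ n, n < 27 ∧ (pb ^ n) x = y)
      (fun x y => (sameCycle_iff_exists_lt pb 27 (by simp) x y).symm)
      ({0, 1, 2, 3, 4, 5, 8, 14, 21} : Finset (Fin 25)) (by decide) (by decide)]
    decide
  · rw [orbitSizes_eq_of_reps pc (fun x y => ∃ n, n < 27 ∧ (pc ^ n) x = y)
      (fun x y => (sameCycle_iff_exists_lt pc 27 (by simp) x y).symm)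
      ({0, 1, 2, 11, 15, 23} : Finset (Fin 25)) (by decide) (by decide)]
    decide
end

section
/- There exist permutations σ₁, σ₂, σ₃ of {1, …, 26} such that σ₁ ∘ σ₂ ∘ σ₃ = id, the subgroup generated by σ₁, σ₂, σ₃ acts transitively on {1, …, 26}, and the multisets of orbit sizes of the cyclic groups generated by σ₁, σ₂, σ₃ are, respectively, {10,5,3,2,1,1,1,1,1,1}, {7,6,2,2,2,2,2,1,1,1}, and {10,9,4,3}. -/
/-!
The triple is exhibited explicitly in cycle notation, and everything is then a finite computation
checked by the kernel. The orbits of `⟨σ⟩` are the `SameCycle` classes, so the orbit sizes can be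
read off from a decidable relation; transitivity follows once the ball of radius 5 around `0` in
the Schreier graph of the three generators is all of `Fin 26`.
-/

open Equiv Finset MulAction

namespace Equiv.Perm

variable {α : Type*}

theorem mem_orbit_zpowers_iff_sameCycle {σ : Perm α} {x y : α} :
    y ∈ orbit (Subgroup.zpowers σ) x ↔ σ.SameCycle x y := by
  constructor
  · rintro ⟨⟨_, k, rfl⟩, rfl⟩
    exact ⟨k, rfl⟩
  · rintro ⟨k, rfl⟩
    exact ⟨⟨σ ^ k, k, rfl⟩, rfl⟩

theorem orbitSizes_eq_map_card_image_sameCycle [Fintype α] [DecidableEq α] (σ : Perm α) :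
    orbitSizes σ = (univ.image fun x => ({y | σ.SameCycle x y} : Finset α)).val.map card := by
  classical
  set orbitFinset : orbitRel.Quotient (Subgroup.zpowers σ) α → Finset α :=
    fun q => q.orbit.toFinset
  have hinj : Function.Injective orbitFinset := fun p q h =>
    orbitRel.Quotient.orbit_injective (Set.toFinset_inj.mp h)
  have himage :
      univ.image orbitFinset = univ.image fun x => ({y | σ.SameCycle x y} : Finset α) := by
    rw [← image_univ_of_surjective (Quotient.mk_surjective (s := orbitRel _ α)), image_image]
    congr 1
    funext x
    ext y
    rw [Function.comp_apply, Set.mem_toFinset, orbitRel.Quotient.mem_orbit, Quotient.eq'',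
      orbitRel_apply, mem_orbit_zpowers_iff_sameCycle, mem_filter_univ]
  rw [← himage, image_val_of_injOn hinj.injOn, Multiset.map_map]
  exact Multiset.map_congr (by congr!) fun q _ => Nat.card_eq_card_toFinset q.orbit

variable [DecidableEq α]

def schreierBall (S : Finset (Perm α)) (x₀ : α) : ℕ → Finset α
  | 0 => {x₀}
  | n + 1 => schreierBall S x₀ n ∪ S.biUnion fun g => (schreierBall S x₀ n).image g

theorem exists_mem_closure_apply_eq_of_mem_schreierBall {S : Finset (Perm α)} {x₀ z : α}
    {n : ℕ} (hz : z ∈ schreierBall S x₀ n) :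
    ∃ g ∈ Subgroup.closure (S : Set (Perm α)), g x₀ = z := by
  induction n generalizing z with
  | zero => exact ⟨1, one_mem _, (mem_singleton.mp hz).symm⟩
  | succ n ih =>
    rcases mem_union.mp hz with hz | hz
    · exact ih hz
    · obtain ⟨s, hs, hz⟩ := mem_biUnion.mp hz
      obtain ⟨y, hy, rfl⟩ := mem_image.mp hz
      obtain ⟨g, hg, rfl⟩ := ih hy
      exact ⟨s * g, mul_mem (Subgroup.subset_closure hs) hg, rfl⟩

theorem exists_mem_closure_apply_eq_of_schreierBall_eq_univ [Fintype α]
    {S : Finset (Perm α)} {x₀ : α} {n : ℕ} (h : schreierBall S x₀ n = univ) (x y : α) :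
    ∃ g ∈ Subgroup.closure (S : Set (Perm α)), g x = y := by
  obtain ⟨gx, hgx, rfl⟩ := exists_mem_closure_apply_eq_of_mem_schreierBall (h ▸ mem_univ x)
  obtain ⟨gy, hgy, rfl⟩ := exists_mem_closure_apply_eq_of_mem_schreierBall (h ▸ mem_univ y)
  exact ⟨gy * gx⁻¹, mul_mem hgy (inv_mem hgx), by simp⟩

end Equiv.Perm

def perm₁ : Perm (Fin 26) :=
  c[0, 3, 24, 4, 2, 11, 21, 10, 1, 25] * c[8, 13, 12, 17, 14] * c[9, 20, 18] * c[7, 23]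

def perm₂ : Perm (Fin 26) :=
  c[3, 12, 11, 15, 10, 22, 5] * c[1, 2, 13, 24, 20, 21] * c[0, 14] * c[4, 23] * c[6, 9] *
    c[16, 18] * c[17, 19]

def perm₃ : Perm (Fin 26) :=
  c[0, 25, 21, 12, 2, 23, 7, 4, 13, 8] * c[5, 22, 10, 20, 6, 9, 16, 18, 24] * c[3, 14, 19, 17] *
    c[1, 15, 11]

/-- Realizability of the degree-26 branch-data triple
`[10, 5, 3, 2, 1, 1, 1, 1, 1, 1]`, `[7, 6, 2, 2, 2, 2, 2, 1, 1, 1]`, `[10, 9, 4, 3]`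
by a transitive permutation triple with product the identity. -/
theorem realizable_triple_8 :
    ∃ σ₁ σ₂ σ₃ : Equiv.Perm (Fin 26),
      σ₁ * σ₂ * σ₃ = 1 ∧
      (∀ x y : Fin 26,
        ∃ g ∈ Subgroup.closure ({σ₁, σ₂, σ₃} : Set (Equiv.Perm (Fin 26))), g x = y) ∧
      orbitSizes σ₁ = ({10, 5, 3, 2, 1, 1, 1, 1, 1, 1} : Multiset ℕ) ∧
      orbitSizes σ₂ = ({7, 6, 2, 2, 2, 2, 2, 1, 1, 1} : Multiset ℕ) ∧
      orbitSizes σ₃ = ({10, 9, 4, 3} : Multiset ℕ) := by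
  refine ⟨perm₁, perm₂, perm₃, by decide +kernel, ?_, ?_, ?_, ?_⟩
  · have hball : Perm.schreierBall {perm₁, perm₂, perm₃} 0 5 = univ := by decide +kernel
    simpa using Perm.exists_mem_closure_apply_eq_of_schreierBall_eq_univ hball
  all_goals rw [Perm.orbitSizes_eq_map_card_image_sameCycle]; decide +kernel
end

section
/- There exist permutations σ₁, σ₂, σ₃ of {1, …, 28} such that σ₁ ∘ σ₂ ∘ σ₃ = id, the subgroup generated by σ₁, σ₂, σ₃ acts transitively on {1, …, 28}, and the multisets of orbit sizes of the cyclic groups generated by σ₁, σ₂, σ₃ are, respectively, {4,3,3,3,3,3,2,2,2,2,1}, {15,5,4,2,1,1}, and {11,7,4,3,3}. -/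
/-! The triple is exhibited explicitly and every required property is a finite check. The orbits of
`zpowers σ` are the cycles of `σ` (`Equiv.Perm.SameCycle`), so the orbit sizes are read off from one
representative per cycle. Transitivity follows by growing the set of points reachable from `0`
under the generators until it exhausts `Fin 28`. -/

open Equiv Finset MulAction

theorem Equiv.Perm.mem_orbit_zpowers_iff_sameCycle_s9 {α : Type*} {σ : Perm α} {x y : α} :
    y ∈ orbit (Subgroup.zpowers σ) x ↔ σ.SameCycle x y := by
  constructor
  · rintro ⟨⟨_, i, rfl⟩, rfl⟩
    exact ⟨i, rfl⟩
  · rintro ⟨i, rfl⟩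
    exact ⟨⟨σ ^ i, i, rfl⟩, rfl⟩

section

variable {α : Type*} [DecidableEq α]

def oneStepReach (gens : List (Perm α)) (S : Finset α) : Finset α :=
  S.biUnion fun x => insert x (gens.map (· x)).toFinset

theorem exists_mem_apply_eq_of_mem_iterate_oneStepReach {H : Subgroup (Perm α)}
    {gens : List (Perm α)} (h_gens : ∀ g ∈ gens, g ∈ H) (a : α) (n : ℕ) :
    ∀ y ∈ (oneStepReach gens)^[n] {a}, ∃ h ∈ H, h a = y := by
  induction n with
  | zero =>
    intro y hy
    rw [Function.iterate_zero_apply, mem_singleton] at hy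
    exact ⟨1, H.one_mem, hy.symm⟩
  | succ n ih =>
    intro y hy
    rw [Function.iterate_succ_apply', oneStepReach, mem_biUnion] at hy
    obtain ⟨x, hx, hxy⟩ := hy
    obtain ⟨h, hH, rfl⟩ := ih x hx
    simp only [mem_insert, List.mem_toFinset, List.mem_map] at hxy
    rcases hxy with rfl | ⟨g, hg, rfl⟩
    · exact ⟨h, hH, rfl⟩
    · exact ⟨g * h, H.mul_mem (h_gens g hg) hH, rfl⟩

variable [Fintype α]

theorem exists_mem_apply_eq_of_iterate_oneStepReach_eq_univ {H : Subgroup (Perm α)}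
    {gens : List (Perm α)} (h_gens : ∀ g ∈ gens, g ∈ H) {a : α} {n : ℕ}
    (h_univ : (oneStepReach gens)^[n] {a} = univ) (x y : α) : ∃ h ∈ H, h x = y := by
  have h_reach z : ∃ h ∈ H, h a = z :=
    exists_mem_apply_eq_of_mem_iterate_oneStepReach h_gens a n z (by simp [h_univ])
  obtain ⟨hx, hxH, rfl⟩ := h_reach x
  obtain ⟨hy, hyH, rfl⟩ := h_reach y
  exact ⟨hy * hx⁻¹, H.mul_mem hyH (H.inv_mem hxH), by simp⟩

theorem Equiv.Perm.card_orbit_zpowers (σ : Perm α) (x : α) :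
    Nat.card (orbit (Subgroup.zpowers σ) x) = #{y | σ.SameCycle x y} := by
  have h : orbit (Subgroup.zpowers σ) x = ↑({y | σ.SameCycle x y} : Finset α) := by
    ext y
    simp [Perm.mem_orbit_zpowers_iff_sameCycle_s9]
  rw [h, Nat.card_coe_set_eq, Set.ncard_coe_finset]

theorem orbitSizes_eq_of_cycle_representatives (σ : Perm α) (reps : List α)
    (h_distinct : reps.Pairwise fun r s => ¬σ.SameCycle r s)
    (h_cover : ∀ x, ∃ r ∈ reps, σ.SameCycle r x) :
    orbitSizes σ = reps.map fun r => #{y | σ.SameCycle r y} := by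
  let Q : α → orbitRel.Quotient (Subgroup.zpowers σ) α := Quotient.mk _
  have h_nodup : (reps.map Q).Nodup := h_distinct.map Q fun r s hrs hQ =>
    hrs (Perm.mem_orbit_zpowers_iff_sameCycle_s9.mp (Quotient.exact hQ.symm))
  have h_mem : ∀ q, q ∈ reps.map Q := by
    rintro ⟨x⟩
    obtain ⟨r, hr, hrx⟩ := h_cover x
    exact List.mem_map.mpr
      ⟨r, hr, Quotient.sound (Perm.mem_orbit_zpowers_iff_sameCycle_s9.mpr hrx.symm)⟩
  have h_univ : (@univ _ (Fintype.ofFinite (orbitRel.Quotient (Subgroup.zpowers σ) α))).val =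
      reps.map Q :=
    ((Finset.nodup _).ext (Multiset.coe_nodup.mpr h_nodup)).mpr fun q => by simp [h_mem]
  rw [orbitSizes, h_univ, Multiset.map_coe, List.map_map]
  congr 1
  exact List.map_congr_left fun r _ => Perm.card_orbit_zpowers σ r

end

def σ₁ : Perm (Fin 28) :=
  c[4, 18, 10, 21] * c[0, 26, 2] * c[3, 12, 11] * c[7, 8, 25] * c[15, 19, 27] * c[16, 17, 20] *
    c[1, 24] * c[5, 6] * c[9, 22] * c[13, 14]

def σ₂ : Perm (Fin 28) :=
  c[1, 9, 13, 26, 7, 14, 10, 17, 6, 12, 18, 24, 23, 2, 19] * c[0, 15, 21, 22, 11] *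
    c[3, 16, 5, 20] * c[4, 8]

def σ₃ : Perm (Fin 28) :=
  c[1, 18, 8, 26, 11, 6, 16, 5, 17, 3, 22] * c[2, 13, 7, 25, 4, 15, 27] * c[0, 23, 24, 19] *
    c[9, 21, 14] * c[10, 12, 20]

/-- Realizability of the degree-28 branch-data triple
`[4, 3, 3, 3, 3, 3, 2, 2, 2, 2, 1]`, `[15, 5, 4, 2, 1, 1]`, `[11, 7, 4, 3, 3]`
by a transitive permutation triple with product the identity. -/
theorem realizable_triple_9 :
    ∃ σ₁ σ₂ σ₃ : Equiv.Perm (Fin 28),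
      σ₁ * σ₂ * σ₃ = 1 ∧
      (∀ x y : Fin 28,
        ∃ g ∈ Subgroup.closure ({σ₁, σ₂, σ₃} : Set (Equiv.Perm (Fin 28))), g x = y) ∧
      orbitSizes σ₁ = ({4, 3, 3, 3, 3, 3, 2, 2, 2, 2, 1} : Multiset ℕ) ∧
      orbitSizes σ₂ = ({15, 5, 4, 2, 1, 1} : Multiset ℕ) ∧
      orbitSizes σ₃ = ({11, 7, 4, 3, 3} : Multiset ℕ) := by
  refine ⟨σ₁, σ₂, σ₃, by decide +kernel, ?_, ?_, ?_, ?_⟩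
  · exact exists_mem_apply_eq_of_iterate_oneStepReach_eq_univ (gens := [σ₁, σ₂, σ₃]) (a := 0)
      (n := 5) (fun g hg => Subgroup.subset_closure (by simpa using hg)) (by decide +kernel)
  -- representatives: the first entry of each cycle of `σᵢ`, then its fixed points
  · rw [orbitSizes_eq_of_cycle_representatives σ₁ [4, 0, 3, 7, 15, 16, 1, 5, 9, 13, 23]
      (by decide +kernel) (by decide +kernel)]
    decide +kernel
  · rw [orbitSizes_eq_of_cycle_representatives σ₂ [1, 0, 3, 4, 25, 27]
      (by decide +kernel) (by decide +kernel)]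
    decide +kernel
  · rw [orbitSizes_eq_of_cycle_representatives σ₃ [1, 2, 0, 9, 10]
      (by decide +kernel) (by decide +kernel)]
    decide +kernel
end

section
/- There exist permutations σ₁, σ₂, σ₃ of {1, …, 28} such that σ₁ ∘ σ₂ ∘ σ₃ = id, the subgroup generated by σ₁, σ₂, σ₃ acts transitively on {1, …, 28}, and the multisets of orbit sizes of the cyclic groups generated by σ₁, σ₂, σ₃ are, respectively, {10,4,4,2,2,1,1,1,1,1,1}, {7,5,3,3,3,3,3,1}, and {11,10,3,1,1,1,1}. -/
/-!
Take explicit `σ₁`, `σ₂` and put `σ₃ := (σ₁ σ₂)⁻¹`, so that the product relation holds by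
construction. The orbits of `⟨σ⟩` are exactly the cycles of `σ`, so `orbitSizes σ` is Mathlib's
cycle-type partition `σ.partition`, which is computable, and the three cycle types are checked by
evaluation. Transitivity is certified by a breadth-first search in the Schreier graph: starting
from `0` and repeatedly adjoining the images under the three generators exhausts `Fin 28` after
nine rounds.
-/

open Equiv MulAction Finset

namespace Equiv.Perm

variable {α : Type*}

theorem orbit_zpowers_eq_setOf_sameCycle (σ : Perm α) (x : α) :
    orbit (Subgroup.zpowers σ) x = {y | σ.SameCycle x y} := by
  ext y
  simp only [mem_orbit_iff, Subgroup.exists_zpowers]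
  rfl

theorem sameCycle_out_iff {σ : Perm α} {q₁ q₂ : orbitRel.Quotient (Subgroup.zpowers σ) α} :
    σ.SameCycle q₁.out q₂.out ↔ q₁ = q₂ := by
  rw [← Quotient.out_equiv_out]
  change _ ↔ q₁.out ∈ orbit (Subgroup.zpowers σ) q₂.out
  rw [orbit_zpowers_eq_setOf_sameCycle, Set.mem_ofPred_eq, sameCycle_comm]

theorem sameCycle_out_mk (σ : Perm α) (x : α) :
    σ.SameCycle (⟦x⟧ : orbitRel.Quotient (Subgroup.zpowers σ) α).out x := by
  have : (⟦x⟧ : orbitRel.Quotient (Subgroup.zpowers σ) α).out ∈ orbit (Subgroup.zpowers σ) x :=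
    Quotient.mk_out (s := orbitRel _ _) x
  rw [orbit_zpowers_eq_setOf_sameCycle] at this
  exact this.symm

variable [Fintype α] [DecidableEq α] (σ : Perm α)

theorem orbit_zpowers_eq_support_cycleOf {x : α} (hx : x ∈ σ.support) :
    orbit (Subgroup.zpowers σ) x = (σ.cycleOf x).support := by
  ext y
  rw [orbit_zpowers_eq_setOf_sameCycle, Set.mem_ofPred_eq, mem_coe, mem_support_cycleOf_iff,
    and_iff_left hx]

theorem orbit_zpowers_eq_singleton {x : α} (hx : x ∉ σ.support) :
    orbit (Subgroup.zpowers σ) x = {x} := by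
  ext y
  rw [orbit_zpowers_eq_setOf_sameCycle, Set.mem_ofPred_eq, Set.mem_singleton_iff]
  exact ⟨fun h => (h.eq_of_left (notMem_support.1 hx)).symm, fun h => h ▸ SameCycle.refl σ x⟩

variable {σ} {q : orbitRel.Quotient (Subgroup.zpowers σ) α}

theorem card_orbit_of_out_mem_support (hq : q.out ∈ σ.support) :
    Nat.card q.orbit = #(σ.cycleOf q.out).support := by
  rw [orbitRel.Quotient.orbit_eq_orbit_out q Quotient.out_eq',
    orbit_zpowers_eq_support_cycleOf σ hq, Nat.card_coe_set_eq, Set.ncard_coe_finset]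

theorem card_orbit_of_out_notMem_support (hq : q.out ∉ σ.support) : Nat.card q.orbit = 1 := by
  rw [orbitRel.Quotient.orbit_eq_orbit_out q Quotient.out_eq', orbit_zpowers_eq_singleton σ hq,
    Nat.card_unique]

theorem out_mk_of_notMem_support {x : α} (hx : x ∉ σ.support) :
    (⟦x⟧ : orbitRel.Quotient (Subgroup.zpowers σ) α).out = x :=
  ((sameCycle_out_mk σ x).symm.eq_of_left (notMem_support.1 hx)).symm

theorem injOn_cycleOf_out :
    Set.InjOn (fun q => σ.cycleOf q.out)
      {q : orbitRel.Quotient (Subgroup.zpowers σ) α | q.out ∈ σ.support} := by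
  intro q₁ _ q₂ hq₂ (h : σ.cycleOf q₁.out = σ.cycleOf q₂.out)
  have : q₂.out ∈ (σ.cycleOf q₁.out).support :=
    h ▸ mem_support_cycleOf_iff.2 ⟨SameCycle.refl _ _, hq₂⟩
  exact sameCycle_out_iff.1 (mem_support_cycleOf_iff.1 this).1

section FintypeQuotient

variable (σ) [Fintype (orbitRel.Quotient (Subgroup.zpowers σ) α)]

theorem image_cycleOf_out_eq_cycleFactorsFinset :
    Finset.image (fun q => σ.cycleOf q.out)
      {q : orbitRel.Quotient (Subgroup.zpowers σ) α | q.out ∈ σ.support} =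
      σ.cycleFactorsFinset := by
  ext c
  simp only [mem_image, mem_filter, mem_univ, true_and]
  constructor
  · rintro ⟨q, hq, rfl⟩
    exact cycleOf_mem_cycleFactorsFinset_iff.2 hq
  · intro hc
    obtain ⟨a, ha⟩ := (mem_cycleFactorsFinset_iff.1 hc).1.nonempty_support
    have hsame := sameCycle_out_mk σ a
    exact ⟨⟦a⟧, hsame.mem_support_iff.2 (mem_cycleFactorsFinset_support_le hc ha),
      hsame.cycleOf_eq.trans (cycle_is_cycleOf ha hc).symm⟩

theorem card_filter_out_notMem_support :
    #{q : orbitRel.Quotient (Subgroup.zpowers σ) α | q.out ∉ σ.support} =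
      Fintype.card α - #σ.support := by
  rw [← card_compl]
  refine card_nbij' (fun q => q.out) (fun x => ⟦x⟧) ?_ ?_ ?_ ?_
  · intro q hq
    simpa using hq
  · intro x hx
    simp only [mem_coe, mem_compl] at hx
    simpa [out_mk_of_notMem_support hx] using hx
  · intro q _
    exact Quotient.out_eq q
  · intro x hx
    exact out_mk_of_notMem_support (mem_compl.1 hx)

end FintypeQuotient

variable (σ) in
theorem orbitSizes_eq_parts_partition : orbitSizes σ = σ.partition.parts := by
  let := Fintype.ofFinite (orbitRel.Quotient (Subgroup.zpowers σ) α)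
  rw [orbitSizes, ← Multiset.filter_add_not (fun q => q.out ∈ σ.support) univ.val,
    Multiset.map_add, parts_partition, cycleType_def, ← image_cycleOf_out_eq_cycleFactorsFinset,
    image_val_of_injOn (injOn_cycleOf_out.mono (by simp)), Multiset.map_map,
    ← card_filter_out_notMem_support]
  congr 1
  · exact Multiset.map_congr rfl fun q hq =>
      card_orbit_of_out_mem_support (Multiset.mem_filter.1 hq).2
  · rw [Multiset.map_congr rfl fun q hq =>
      card_orbit_of_out_notMem_support (Multiset.mem_filter.1 hq).2, Multiset.map_const']
    rfl

end Equiv.Perm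

section Transitivity

variable {α : Type*} [DecidableEq α]

def adjoinImages (s : Finset (Perm α)) (t : Finset α) : Finset α :=
  t ∪ s.biUnion fun g => t.image g

theorem iterate_adjoinImages_subset_orbit (s : Finset (Perm α)) (x : α) (n : ℕ) :
    ((adjoinImages s)^[n] {x} : Set α) ⊆ orbit (Subgroup.closure (s : Set (Perm α))) x := by
  induction n with
  | zero => simp [mem_orbit_self]
  | succ n ih =>
    rw [Function.iterate_succ_apply']
    intro y hy
    simp only [adjoinImages, coe_union, coe_biUnion, coe_image, Set.mem_union, Set.mem_iUnion,
      Set.mem_image, mem_coe] at hy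
    rcases hy with hy | ⟨g, hg, z, hz, rfl⟩
    · exact ih hy
    · exact mem_orbit_of_mem_orbit ⟨g, Subgroup.subset_closure hg⟩ (ih hz)

theorem exists_mem_closure_apply_eq_of_iterate_adjoinImages_eq_univ [Fintype α]
    {s : Finset (Perm α)} {x₀ : α} {n : ℕ} (h : (adjoinImages s)^[n] {x₀} = univ) (x y : α) :
    ∃ g ∈ Subgroup.closure (s : Set (Perm α)), g x = y := by
  have : IsPretransitive (Subgroup.closure (s : Set (Perm α))) α := by
    rw [isPretransitive_iff_orbit_eq_univ x₀, Set.eq_univ_iff_forall]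
    intro z
    exact iterate_adjoinImages_subset_orbit s x₀ n (by simp [h])
  obtain ⟨g, hg⟩ := exists_smul_eq (Subgroup.closure (s : Set (Perm α))) x y
  exact ⟨g, g.2, hg⟩

end Transitivity

def monodromy₁ : Perm (Fin 28) :=
  c[2, 4, 11, 10, 23, 3, 12, 25, 8, 21] * c[1, 13, 22, 19] * c[5, 7, 16, 18] * c[0, 15] * c[6, 9]

def monodromy₂ : Perm (Fin 28) :=
  c[4, 17, 6, 26, 22, 18, 11] * c[7, 23, 12, 14, 16] * c[0, 15, 1] * c[2, 3, 9] * c[5, 21, 8] *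
    c[10, 27, 19] * c[20, 25, 24]

def monodromy₃ : Perm (Fin 28) := (monodromy₁ * monodromy₂)⁻¹

section Evaluation

set_option maxRecDepth 4000

theorem orbitSizes_monodromy₁ : orbitSizes monodromy₁ = {10, 4, 4, 2, 2, 1, 1, 1, 1, 1, 1} := by
  rw [Perm.orbitSizes_eq_parts_partition]
  decide

theorem orbitSizes_monodromy₂ : orbitSizes monodromy₂ = {7, 5, 3, 3, 3, 3, 3, 1} := by
  rw [Perm.orbitSizes_eq_parts_partition]
  decide

theorem orbitSizes_monodromy₃ : orbitSizes monodromy₃ = {11, 10, 3, 1, 1, 1, 1} := by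
  rw [Perm.orbitSizes_eq_parts_partition]
  decide

theorem exists_mem_closure_monodromy_apply_eq (x y : Fin 28) :
    ∃ g ∈ Subgroup.closure ({monodromy₁, monodromy₂, monodromy₃} : Set (Perm (Fin 28))),
      g x = y := by
  simpa only [coe_insert, coe_singleton] using
    exists_mem_closure_apply_eq_of_iterate_adjoinImages_eq_univ
      (s := {monodromy₁, monodromy₂, monodromy₃}) (x₀ := 0) (n := 9) (by decide) x y

end Evaluation

/-- Realizability of the degree-28 branch-data triple
`[10, 4, 4, 2, 2, 1, 1, 1, 1, 1, 1]`, `[7, 5, 3, 3, 3, 3, 3, 1]`, `[11, 10, 3, 1, 1, 1, 1]`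
by a transitive permutation triple with product the identity. -/
theorem realizable_triple_10 :
    ∃ σ₁ σ₂ σ₃ : Equiv.Perm (Fin 28),
      σ₁ * σ₂ * σ₃ = 1 ∧
      (∀ x y : Fin 28,
        ∃ g ∈ Subgroup.closure ({σ₁, σ₂, σ₃} : Set (Equiv.Perm (Fin 28))), g x = y) ∧
      orbitSizes σ₁ = ({10, 4, 4, 2, 2, 1, 1, 1, 1, 1, 1} : Multiset ℕ) ∧
      orbitSizes σ₂ = ({7, 5, 3, 3, 3, 3, 3, 1} : Multiset ℕ) ∧
      orbitSizes σ₃ = ({11, 10, 3, 1, 1, 1, 1} : Multiset ℕ) := by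
  exact ⟨monodromy₁, monodromy₂, monodromy₃, mul_inv_cancel _,
    exists_mem_closure_monodromy_apply_eq, orbitSizes_monodromy₁, orbitSizes_monodromy₂,
    orbitSizes_monodromy₃⟩
end

section
/- There exist permutations σ₁, σ₂, σ₃ of {1, …, 28} such that σ₁ ∘ σ₂ ∘ σ₃ = id, the subgroup generated by σ₁, σ₂, σ₃ acts transitively on {1, …, 28}, and the multisets of orbit sizes of the cyclic groups generated by σ₁, σ₂, σ₃ are, respectively, {7,6,3,2,2,2,1,1,1,1,1,1}, {4,3,3,3,3,2,2,2,2,2,2}, and {19,4,3,1,1}. -/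
open Finset Function MulAction Multiset Equiv

theorem Multiset.count_bind_replicate_self (P : Multiset ℕ) (k : ℕ) :
    count k (P.bind fun k => replicate k k) = k * count k P := by
  induction P using Multiset.induction_on with
  | empty => simp
  | cons a P ih =>
    rcases eq_or_ne a k with rfl | h
    · simp [ih, mul_add, add_comm]
    · simp [ih, h.symm, mem_replicate]

theorem Multiset.eq_of_bind_replicate_self_eq {M N : Multiset ℕ} (hM : 0 ∉ M) (hN : 0 ∉ N)
    (h : M.bind (fun k => replicate k k) = N.bind (fun k => replicate k k)) : M = N := by
  ext k
  rcases Nat.eq_zero_or_pos k with rfl | hk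
  · rw [count_eq_zero.2 hM, count_eq_zero.2 hN]
  · apply Nat.eq_of_mul_eq_mul_left hk
    rw [← count_bind_replicate_self, ← count_bind_replicate_self, h]

theorem Finset.univ_val_map_eq_bind_replicate_card_fiber {α β : Type*} [Fintype α] [Fintype β]
    [DecidableEq β] (π : α → β) :
    (univ : Finset α).val.map π =
      (univ : Finset β).val.bind fun b => replicate #{a | π a = b} b := by
  ext b
  simp [count_map, count_bind, count_replicate, Finset.card, eq_comm]

theorem MulAction.univ_val_map_card_orbit (G α : Type*) [Group G] [MulAction G α] [Fintype α]
    [Fintype (orbitRel.Quotient G α)] :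
    (univ : Finset α).val.map (fun a => Nat.card (orbit G a)) =
      (univ : Finset (orbitRel.Quotient G α)).val.bind
        fun q => replicate (Nat.card q.orbit) (Nat.card q.orbit) := by
  classical
  have card_fiber (q : orbitRel.Quotient G α) :
      #{a | (Quotient.mk'' a : orbitRel.Quotient G α) = q} = Nat.card q.orbit := by
    rw [← Nat.card_eq_finsetCard]
    congr 2
    ext a
    simp [orbitRel.Quotient.mem_orbit]
  calc (univ : Finset α).val.map (fun a => Nat.card (orbit G a))
      = ((univ : Finset α).val.map (Quotient.mk'' : α → orbitRel.Quotient G α)).map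
          fun q : orbitRel.Quotient G α => Nat.card q.orbit := by
        rw [Multiset.map_map]; rfl
    _ = _ := by
        rw [univ_val_map_eq_bind_replicate_card_fiber, Multiset.map_bind]
        simp only [card_fiber, map_replicate]

section FirstReturn

variable {α : Type*} [DecidableEq α]

def Function.firstReturn (f : α → α) (n : ℕ) (x : α) : ℕ :=
  ((List.range' 1 n).find? fun k => f^[k] x = x).getD 0

theorem Function.firstReturn_eq_minimalPeriod {f : α → α} {n : ℕ} {x : α}
    (hx : x ∈ periodicPts f) (hn : minimalPeriod f x ≤ n) :
    firstReturn f n x = minimalPeriod f x := by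
  have hpos := minimalPeriod_pos_of_mem_periodicPts hx
  rw [firstReturn, (List.find?_range'_eq_some.2 _ : _ = some (minimalPeriod f x))]
  · rfl
  refine ⟨by simp, by simp; omega, fun j hj hjm => ?_⟩
  simpa [IsPeriodicPt, IsFixedPt] using
    not_isPeriodicPt_of_pos_of_lt_minimalPeriod (by omega) hjm

end FirstReturn

namespace Equiv.Perm

variable {α : Type*}

theorem natCard_orbit_zpowers (σ : Perm α) (x : α) :
    Nat.card (orbit (Subgroup.zpowers σ) x) = minimalPeriod σ x :=
  (Nat.card_congr (orbitZPowersEquiv σ x)).trans (Nat.card_zmod _)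

theorem zero_notMem_orbitSizes [Finite α] (σ : Perm α) : 0 ∉ orbitSizes σ := by
  simp only [orbitSizes, Multiset.mem_map, not_exists, not_and]
  intro q _ hq
  have := (orbitRel.Quotient.nonempty_orbit q).to_subtype
  exact Nat.card_ne_zero.2 ⟨this, inferInstance⟩ hq

theorem orbitSizes_bind_replicate [Fintype α] (σ : Perm α) :
    (orbitSizes σ).bind (fun k => replicate k k) =
      (univ : Finset α).val.map (minimalPeriod σ) := by
  let := Fintype.ofFinite (orbitRel.Quotient (Subgroup.zpowers σ) α)
  rw [orbitSizes, bind_map, ← univ_val_map_card_orbit]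
  simp only [natCard_orbit_zpowers]

theorem orbitSizes_eq_of_bind_replicate_eq [Fintype α] [DecidableEq α] (σ : Perm α)
    {T : Multiset ℕ} (hT : 0 ∉ T)
    (h : T.bind (fun k => replicate k k) =
      (univ : Finset α).val.map (firstReturn σ (Fintype.card α))) :
    orbitSizes σ = T := by
  refine eq_of_bind_replicate_self_eq (zero_notMem_orbitSizes σ) hT ?_
  rw [orbitSizes_bind_replicate, h]
  refine Multiset.map_congr rfl fun x _ => ?_
  exact (firstReturn_eq_minimalPeriod (σ.injective.mem_periodicPts x) minimalPeriod_le_card).symm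

end Equiv.Perm

section ReachStep

variable {α : Type*} [Fintype α] [DecidableEq α]

def reachStep (L : List (Perm α)) (U : Finset α) : Finset α :=
  {y | y ∈ U ∨ ∃ s ∈ L, s⁻¹ y ∈ U}

theorem coe_iterate_reachStep_subset_orbit {L : List (Perm α)} {H : Subgroup (Perm α)}
    (hL : ∀ s ∈ L, s ∈ H) (x : α) (n : ℕ) : ↑((reachStep L)^[n] {x}) ⊆ orbit H x := by
  induction n with
  | zero => simp
  | succ n ih =>
    rw [iterate_succ_apply']
    intro y hy
    simp only [reachStep, coe_filter, Finset.mem_univ, true_and] at hy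
    obtain hy | ⟨s, hs, hy⟩ := hy
    · exact ih hy
    · simpa using mem_orbit_of_mem_orbit (⟨s, hL s hs⟩ : H) (ih hy)

theorem isPretransitive_of_iterate_reachStep_eq_univ {L : List (Perm α)} {H : Subgroup (Perm α)}
    (hL : ∀ s ∈ L, s ∈ H) (x : α) (n : ℕ) (h : (reachStep L)^[n] {x} = univ) :
    IsPretransitive H α := by
  rw [isPretransitive_iff_orbit_eq_univ x, Set.eq_univ_iff_forall]
  intro y
  exact coe_iterate_reachStep_subset_orbit hL x n (by simp [h])

end ReachStep

def ρ₁ : Perm (Fin 28) :=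
  c[1, 6, 12, 5, 2, 11, 20] * c[8, 10, 16, 9, 21, 14] * c[7, 18, 23] * c[3, 17] * c[13, 19] *
    c[22, 25]

def ρ₂ : Perm (Fin 28) :=
  c[4, 21, 14, 27] * c[0, 17, 24] * c[3, 18, 7] * c[8, 10, 25] * c[16, 20, 26] * c[1, 9] *
    c[2, 5] * c[6, 23] * c[11, 19] * c[12, 22] * c[13, 15]

def ρ₃ : Perm (Fin 28) :=
  c[0, 24, 17, 7, 6, 9, 26, 20, 19, 15, 13, 11, 5, 22, 10, 25, 12, 23, 3] * c[1, 16, 8, 21] *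
    c[4, 27, 14]

set_option maxRecDepth 100000 in
/-- Realizability of the degree-28 branch-data triple
`[7, 6, 3, 2, 2, 2, 1, 1, 1, 1, 1, 1]`, `[4, 3, 3, 3, 3, 2, 2, 2, 2, 2, 2]`, `[19, 4, 3, 1, 1]`
by a transitive permutation triple with product the identity. -/
theorem realizable_triple_11 :
    ∃ σ₁ σ₂ σ₃ : Equiv.Perm (Fin 28),
      σ₁ * σ₂ * σ₃ = 1 ∧
      (∀ x y : Fin 28,
        ∃ g ∈ Subgroup.closure ({σ₁, σ₂, σ₃} : Set (Equiv.Perm (Fin 28))), g x = y) ∧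
      orbitSizes σ₁ = ({7, 6, 3, 2, 2, 2, 1, 1, 1, 1, 1, 1} : Multiset ℕ) ∧
      orbitSizes σ₂ = ({4, 3, 3, 3, 3, 2, 2, 2, 2, 2, 2} : Multiset ℕ) ∧
      orbitSizes σ₃ = ({19, 4, 3, 1, 1} : Multiset ℕ) := by
  refine ⟨ρ₁, ρ₂, ρ₃, Equiv.ext (by decide), fun x y => ?_,
    ρ₁.orbitSizes_eq_of_bind_replicate_eq (by decide) (by decide),
    ρ₂.orbitSizes_eq_of_bind_replicate_eq (by decide) (by decide),
    ρ₃.orbitSizes_eq_of_bind_replicate_eq (by decide) (by decide)⟩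
  set H := Subgroup.closure ({ρ₁, ρ₂, ρ₃} : Set (Perm (Fin 28)))
  have hgen : ∀ s ∈ [ρ₁, ρ₂, ρ₃], s ∈ H := fun s hs =>
    Subgroup.subset_closure (by simpa using hs)
  have : IsPretransitive H (Fin 28) :=
    isPretransitive_of_iterate_reachStep_eq_univ hgen 0 8 (by decide)
  obtain ⟨⟨g, hg⟩, hgxy⟩ := exists_smul_eq H x y
  exact ⟨g, hg, hgxy⟩
end
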